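/- Chapman–Kolmogorov equation for coarse-grained evolution (Theorem 3): Let 𝒫 be a Boltzmann partition of Ω, U a measure-preserving bijection, and p a probability mass function on the cells of 𝒫. If f = Σ_{B∈𝒫} p(B) ρ_B is the corresponding coarse-grained density, then C(f ∘ U⁻¹) = Σ_{A∈𝒫} p'(A) ρ_A pointwise, where p'(A) = Σ_{B∈𝒫} Pr(A|B) p(B) and Pr(A|B) = μ(U(B) ∩ A)/μ(B); i.e., the cell probabilities evolve by the Markov transition matrix of transition probabilities. -/

import Mathlib

open MeasureTheory Set

/-- The coarse-graining of a function `f` with respect to the partition `P`: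
`(Cf)(x) = Σ_{B∈𝒫} (∫_B f dμ / μ(B)) χ_B(x)`. -/
noncomputable def coarseGrain {Ω : Type*} [MeasurableSpace Ω]
    (μ : Measure Ω) (P : ℕ → Set Ω) (f : Ω → ℝ) : Ω → ℝ :=
  fun x => ∑' n, Set.indicator (P n)
    (fun _ => (∫ y in P n, f y ∂μ) / (μ (P n)).toReal) x

/-- The Boltzmann state of a cell `A`: the probability density `ρ_A = χ_A / μ(A)`. -/
noncomputable def boltzmannState {Ω : Type*} [MeasurableSpace Ω]
    (μ : Measure Ω) (A : Set Ω) : Ω → ℝ :=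
  Set.indicator A (fun _ => ((μ A).toReal)⁻¹)

/-- The Gibbs entropy `S_G[ρ] = −∫ ρ log ρ dμ` (with `0 · log 0 = 0`). -/
noncomputable def gibbsEntropy {Ω : Type*} [MeasurableSpace Ω]
    (μ : Measure Ω) (ρ : Ω → ℝ) : ℝ :=
  - ∫ x, ρ x * Real.log (ρ x) ∂μ

/-! Both sides are sums over cells `a` of multiples of `χ_{P a}`, so it suffices to compare
coefficients. Now `f ∘ U⁻¹ = Σ_b p(b) χ_{U(P b)} / μ(P b)`, and this series may be integrated
over `P a` term by term because `U` preserves `μ`: `μ(U(P b) ∩ P a) ≤ μ(U(P b)) = μ(P b)` bounds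
the `b`-th term by `|p(b)|`. -/

open scoped ENNReal

theorem ENNReal.enorm_inv_toReal_mul_le_one {a b : ℝ≥0∞} (hab : a ≤ b) : ‖b.toReal⁻¹‖ₑ * a ≤ 1 := by
  rcases eq_or_ne b.toReal 0 with hb | hb
  · simp [hb]
  obtain ⟨hb0, hbtop⟩ := ENNReal.toReal_ne_zero.1 hb
  rwa [enorm_inv hb, Real.enorm_of_nonneg ENNReal.toReal_nonneg, ENNReal.ofReal_toReal hbtop,
    ENNReal.inv_mul_le_iff hb0 hbtop, mul_one]

theorem MeasureTheory.integral_tsum_indicator_const {α ι E : Type*} [MeasurableSpace α]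
    [Countable ι] [NormedAddCommGroup E] [NormedSpace ℝ E] [CompleteSpace E]
    (ν : Measure α) {S : ι → Set α} (hS : ∀ i, MeasurableSet (S i)) (c : ι → E)
    (hc : ∑' i, ‖c i‖ₑ * ν (S i) ≠ ∞) :
    ∫ x, ∑' i, (S i).indicator (fun _ => c i) x ∂ν = ∑' i, ν.real (S i) • c i := by
  rw [integral_tsum (fun i => (stronglyMeasurable_const.indicator (hS i)).aestronglyMeasurable)]
  · exact tsum_congr fun i => integral_indicator_const _ (hS i)
  · simpa only [enorm_indicator_eq_indicator_enorm, lintegral_indicator_const (hS _)] using hc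

theorem setIntegral_tsum_boltzmannState_comp_symm {Ω : Type*} [MeasurableSpace Ω]
    {μ : Measure Ω} {P : ℕ → Set Ω} (hP : ∀ n, MeasurableSet (P n))
    {U : Ω ≃ᵐ Ω} (hU : MeasurePreserving U μ μ) {p : ℕ → ℝ} (hp : Summable p) (A : Set Ω) :
    ∫ y in A, ∑' b, p b * boltzmannState μ (P b) (U.symm y) ∂μ
      = ∑' b, (μ (U '' P b ∩ A)).toReal / (μ (P b)).toReal * p b := by
  have hpush : ∀ b y, p b * boltzmannState μ (P b) (U.symm y)
      = (U '' P b).indicator (fun _ => p b * (μ (P b)).toReal⁻¹) y := by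
    intro b y
    by_cases hy : U.symm y ∈ P b <;> simp [boltzmannState, U.image_eq_preimage_symm, hy]
  have hmeas : ∀ b, MeasurableSet (U '' P b) := fun b => U.measurableSet_image.2 (hP b)
  have hbound : ∀ b, ‖p b * (μ (P b)).toReal⁻¹‖ₑ * μ.restrict A (U '' P b) ≤ ‖p b‖ₑ := by
    intro b
    rw [enorm_mul, mul_assoc]
    refine mul_le_of_le_one_right zero_le (ENNReal.enorm_inv_toReal_mul_le_one ?_)
    calc μ.restrict A (U '' P b) ≤ μ (U '' P b) := Measure.restrict_apply_le _ _
      _ = μ (P b) := by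
        rw [U.image_eq_preimage_symm]; exact (hU.symm U).measure_preimage_equiv _
  simp_rw [hpush]
  rw [integral_tsum_indicator_const _ hmeas]
  · refine tsum_congr fun b => ?_
    rw [measureReal_def, Measure.restrict_apply (hmeas b), smul_eq_mul]
    ring
  · exact ne_top_of_le_ne_top (tsum_enorm_ne_top_iff_summable_norm.2 hp.norm)
      (ENNReal.tsum_le_tsum hbound)

theorem chapman_kolmogorov_coarseGrain_general {Ω : Type*} [MeasurableSpace Ω]
    (μ : Measure Ω)
    (P : ℕ → Set Ω) (hPmeas : ∀ n, MeasurableSet (P n))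
    (U : Ω ≃ᵐ Ω) (hU : MeasurePreserving U μ μ)
    (p : ℕ → ℝ) (hpsum : HasSum p 1)
    (f : Ω → ℝ) (hf : f = fun x => ∑' n, p n * boltzmannState μ (P n) x) :
    coarseGrain μ P (fun x => f (U.symm x))
      = fun x => ∑' a,
          (∑' b, ((μ (U '' P b ∩ P a)).toReal / (μ (P b)).toReal) * p b)
            * boltzmannState μ (P a) x := by
  subst hf
  funext x
  refine tsum_congr fun a => ?_
  rw [setIntegral_tsum_boltzmannState_comp_symm hPmeas hU hpsum.summable]
  by_cases hx : x ∈ P a <;> simp [boltzmannState, hx, div_eq_mul_inv]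

/-- **Chapman–Kolmogorov equation** for coarse-grained evolution (Theorem 3): if
`f = Σ_B p(B) ρ_B` is a coarse-grained density for a probability mass function `p` on the
cells of a Boltzmann partition, then `C(f ∘ U⁻¹) = Σ_A p'(A) ρ_A` where
`p'(A) = Σ_B Pr(A|B) p(B)` and `Pr(A|B) = μ(U B ∩ A)/μ(B)`. -/
theorem chapman_kolmogorov_coarseGrain {Ω : Type*} [MeasurableSpace Ω]
    (μ : Measure Ω) [SigmaFinite μ]
    (P : ℕ → Set Ω) (hPmeas : ∀ n, MeasurableSet (P n))
    (hPdisj : Pairwise (Function.onFun Disjoint P)) (hPcover : (⋃ n, P n) = Set.univ)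
    (hPpos : ∀ n, 0 < μ (P n)) (hPfin : ∀ n, μ (P n) < ⊤)
    (U : Ω ≃ᵐ Ω) (hU : MeasurePreserving U μ μ)
    (p : ℕ → ℝ) (hp0 : ∀ n, 0 ≤ p n) (hp1 : ∀ n, p n ≤ 1) (hpsum : HasSum p 1)
    (f : Ω → ℝ) (hf : f = fun x => ∑' n, p n * boltzmannState μ (P n) x) :
    coarseGrain μ P (fun x => f (U.symm x))
      = fun x => ∑' a,
          (∑' b, ((μ (U '' P b ∩ P a)).toReal / (μ (P b)).toReal) * p b)
            * boltzmannState μ (P a) x :=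
  chapman_kolmogorov_coarseGrain_general μ P hPmeas U hU p hpsum f hf
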